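/- Let P be a program over 𝒰 satisfying Δʳ for A, B ⊆ 𝒰, and let A′ = A ∩ B. Then P_{|𝒰 ∖ A′} is an A′-simplification of P relative to B. -/
import Mathlib


/-- An extended rule over a type of atoms: head, positive body, negative body,
double-negated body. -/
structure ASPRule (Atom : Type) where
  head : Finset Atom
  pos : Finset Atom
  neg : Finset Atom
  nneg : Finset Atom
deriving DecidableEq

/-- A program is a finite set of rules. -/
abbrev ASPProgram (Atom : Type) [DecidableEq Atom] := Finset (ASPRule Atom)

section Defs

variable {Atom : Type} [DecidableEq Atom] [Fintype Atom]

/-- A rule is over `S` if all its atoms lie in `S`. -/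
def ruleOver (r : ASPRule Atom) (S : Finset Atom) : Prop :=
  r.head ⊆ S ∧ r.pos ⊆ S ∧ r.neg ⊆ S ∧ r.nneg ⊆ S

/-- A program is over `S` if all its rules are over `S`. -/
def progOver (P : ASPProgram Atom) (S : Finset Atom) : Prop :=
  ∀ r ∈ P, ruleOver r S

/-- `I` satisfies (is a model of) rule `r`. -/
def satRule (I : Finset Atom) (r : ASPRule Atom) : Prop :=
  ((r.head ∪ r.neg) ∩ I).Nonempty ∨ ¬ (r.pos ∪ r.nneg ⊆ I)

/-- `I` is a model of program `P`. -/
def sat (I : Finset Atom) (P : ASPProgram Atom) : Prop :=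
  ∀ r ∈ P, satRule I r

/-- The GL-reduct `P^I`. -/
def reduct (P : ASPProgram Atom) (I : Finset Atom) : ASPProgram Atom :=
  (P.filter (fun r => r.neg ∩ I = ∅ ∧ r.nneg ⊆ I)).image
    (fun r => ⟨r.head, r.pos, ∅, ∅⟩)

/-- The answer sets of `P`: minimal models of the reduct. -/
def AS (P : ASPProgram Atom) : Set (Finset Atom) :=
  {I | sat I (reduct P I) ∧ ∀ J ⊂ I, ¬ sat J (reduct P I)}

/-- Projection of a program onto `𝒰 ∖ A`: rules with a head or negative-body atom
from `A` are dropped; in the remaining rules the atoms of `A` are removed from the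
positive and double-negated bodies. -/
def projAway (P : ASPProgram Atom) (A : Finset Atom) : ASPProgram Atom :=
  (P.filter (fun r => r.neg ∩ A = ∅ ∧ r.head ∩ A = ∅)).image
    (fun r => ⟨r.head, r.pos \ A, r.neg, r.nneg \ A⟩)

/-- `R` is `A`-separated: a union of a program over `𝒰 ∖ A` and a program over `A`. -/
def ASeparated (R : ASPProgram Atom) (A : Finset Atom) : Prop :=
  ∃ R₁ R₂ : ASPProgram Atom, R = R₁ ∪ R₂ ∧ progOver R₁ Aᶜ ∧ progOver R₂ A

/-- The defining equation of a (strong) `A`-simplification of `P` relative to `B`: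
`AS(P ∪ R)_{|Ā} = AS(Q ∪ R_{|Ā})` for every `A`-separated program `R` over `B`. -/
def SimpEq (P : ASPProgram Atom) (A B : Finset Atom) (Q : ASPProgram Atom) : Prop :=
  ∀ R : ASPProgram Atom, progOver R B → ASeparated R A →
    (fun I => I \ A) '' AS (P ∪ R) = AS (Q ∪ projAway R A)

/-- The SE-models of `P`. -/
def SE (P : ASPProgram Atom) : Set (Finset Atom × Finset Atom) :=
  {p | p.1 ⊆ p.2 ∧ sat p.2 P ∧ sat p.1 (reduct P p.2)}

/-- The (relativized) `B`-SE-models of `P`. -/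
def SEB (B : Finset Atom) (P : ASPProgram Atom) : Set (Finset Atom × Finset Atom) :=
  {p | (p.1 = p.2 ∨ p.1 ⊂ p.2 ∩ B) ∧ sat p.2 P ∧
    (∀ Y' ⊂ p.2, Y' ∩ B = p.2 ∩ B → ¬ sat Y' (reduct P p.2)) ∧
    (p.1 ⊂ p.2 → ∃ X' ⊆ p.2, X' ∩ B = p.1 ∧ sat X' (reduct P p.2))}

/-- `SE^{A₁,A₂}(P)`: the `A₂`-SE-models `⟨X,Y⟩` of `P` with `Y ⊆ A₁`. -/
def SERel (P : ASPProgram Atom) (A₁ A₂ : Finset Atom) : Set (Finset Atom × Finset Atom) :=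
  {p | p ∈ SEB A₂ P ∧ p.2 ⊆ A₁}

/-- `P` satisfies `Δʳ` for `A`, `B`. -/
def DeltaR (P : ASPProgram Atom) (A B : Finset Atom) : Prop :=
  (∀ Y : Finset Atom, (Y, Y) ∈ SEB B P → A ∩ B ⊆ Y) ∧
  (∀ X Y : Finset Atom, (X, Y) ∈ SE P → (Y, Y) ∈ SEB B P → X \ A = Y \ A → X = Y) ∧
  (∀ X Y : Finset Atom, (X, Y) ∈ SEB B P → (X ∪ (Y ∩ A ∩ B), Y) ∈ SEB B P)

/-- The family `𝓡^Y_{⟨P,A,B⟩}`. -/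
def RFam (P : ASPProgram Atom) (A B Y : Finset Atom) : Set (Set (Finset Atom)) :=
  {S | ∃ A' ⊆ A, (Y ∪ A', Y ∪ A') ∈ SEB B P ∧
    S = {Z | ∃ X : Finset Atom, (X, Y ∪ A') ∈ SEB B P ∧ Z = X \ A}}

/-- `P` satisfies criterion `Ω_{A,B}`: for some `Y ⊆ 𝒰 ∖ A` the family
`𝓡^Y_{⟨P,A,B⟩}` is non-empty and has no `⊆`-least element. -/
def OmegaCrit (P : ASPProgram Atom) (A B : Finset Atom) : Prop :=
  ∃ Y : Finset Atom, Y ⊆ Aᶜ ∧ (RFam P A B Y).Nonempty ∧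
    ¬ ∃ S ∈ RFam P A B Y, ∀ T ∈ RFam P A B Y, S ⊆ T

/-- `⋂ 𝓡^Y_{⟨P,A,B⟩}`, taken to be `∅` when the family is empty. -/
def RInter (P : ASPProgram Atom) (A B Y : Finset Atom) : Set (Finset Atom) :=
  {X | (RFam P A B Y).Nonempty ∧ ∀ S ∈ RFam P A B Y, X ∈ S}

/-- The `A`-`B`-SE-models `SE^B_A(P)` of `P`. -/
def SEBA (P : ASPProgram Atom) (A B : Finset Atom) : Set (Finset Atom × Finset Atom) :=
  {p | ∃ Y : Finset Atom, (Y, Y) ∈ SEB B P ∧ p = (Y \ A, Y \ A)} ∪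
  {p | ∃ X Y : Finset Atom, (X, Y) ∈ SEB B P ∧ X ⊂ Y ∧
    (∀ Y' : Finset Atom, (Y', Y') ∈ SEB B P → Y' \ A = Y \ A →
      ∃ X' : Finset Atom, (X', Y') ∈ SEB B P ∧ X' \ A = X \ A) ∧
    p = (X \ A, Y \ A)}

end Defs

section Aux
variable {Atom : Type} [DecidableEq Atom] [Fintype Atom]

lemma inter_sdiff_of_disj {n A Y : Finset Atom} (h : n ∩ A = ∅) :
    n ∩ (Y \ A) = n ∩ Y := by
  ext x
  simp only [Finset.mem_inter, Finset.mem_sdiff]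
  constructor
  · rintro ⟨hn, hY, -⟩; exact ⟨hn, hY⟩
  · rintro ⟨hn, hY⟩
    refine ⟨hn, hY, fun hA => ?_⟩
    have : x ∈ n ∩ A := Finset.mem_inter.mpr ⟨hn, hA⟩
    simp [h] at this

lemma sdiff_subset_iff' {s A Y : Finset Atom} (hA : A ⊆ Y) :
    s \ A ⊆ Y \ A ↔ s ⊆ Y := by
  constructor
  · intro h x hx
    by_cases hxA : x ∈ A
    · exact hA hxA
    · exact (Finset.mem_sdiff.mp (h (Finset.mem_sdiff.mpr ⟨hx, hxA⟩))).1
  · intro h x hx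
    rcases Finset.mem_sdiff.mp hx with ⟨hxs, hxA⟩
    exact Finset.mem_sdiff.mpr ⟨h hxs, hxA⟩

lemma satRule_proj {A Y : Finset Atom} (hA : A ⊆ Y) {r : ASPRule Atom}
    (hh : r.head ∩ A = ∅) (hn : r.neg ∩ A = ∅) :
    satRule (Y \ A) ⟨r.head, r.pos \ A, r.neg, r.nneg \ A⟩ ↔ satRule Y r := by
  have h1 : (r.head ∪ r.neg) ∩ A = ∅ := by
    rw [Finset.union_inter_distrib_right, hh, hn]; simp
  have h2 : (r.head ∪ r.neg) ∩ (Y \ A) = (r.head ∪ r.neg) ∩ Y :=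
    inter_sdiff_of_disj h1
  have h3 : r.pos \ A ∪ r.nneg \ A = (r.pos ∪ r.nneg) \ A := by
    rw [Finset.union_sdiff_distrib]
  simp only [satRule, h2, h3, sdiff_subset_iff' hA]

lemma sat_union {I : Finset Atom} {P R : ASPProgram Atom} :
    sat I (P ∪ R) ↔ sat I P ∧ sat I R := by
  constructor
  · exact fun h => ⟨fun r hr => h r (Finset.mem_union_left _ hr),
      fun r hr => h r (Finset.mem_union_right _ hr)⟩
  · rintro ⟨h1, h2⟩ r hr
    rcases Finset.mem_union.mp hr with h | h
    exacts [h1 r h, h2 r h]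

lemma reduct_union {I : Finset Atom} {P R : ASPProgram Atom} :
    reduct (P ∪ R) I = reduct P I ∪ reduct R I := by
  simp [reduct, Finset.filter_union, Finset.image_union]

lemma projAway_union {A : Finset Atom} {P R : ASPProgram Atom} :
    projAway (P ∪ R) A = projAway P A ∪ projAway R A := by
  simp [projAway, Finset.filter_union, Finset.image_union]

lemma sat_reduct_iff {Y : Finset Atom} {P : ASPProgram Atom} :
    sat Y (reduct P Y) ↔ sat Y P := by
  constructor
  · intro h r hr
    by_cases hneg : r.neg ∩ Y = ∅
    · by_cases hnn : r.nneg ⊆ Y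
      · have hmem : (⟨r.head, r.pos, ∅, ∅⟩ : ASPRule Atom) ∈ reduct P Y := by
          simp only [reduct, Finset.mem_image, Finset.mem_filter]
          exact ⟨r, ⟨hr, hneg, hnn⟩, rfl⟩
        have := h _ hmem
        simp only [satRule, Finset.union_empty] at this ⊢
        rcases this with h1 | h1
        · exact Or.inl ⟨h1.choose, Finset.mem_inter.mpr
            ⟨Finset.mem_union_left _ (Finset.mem_inter.mp h1.choose_spec).1,
             (Finset.mem_inter.mp h1.choose_spec).2⟩⟩
        · exact Or.inr fun hsub => h1 (fun x hx => hsub (Finset.mem_union_left _ hx))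
      · exact Or.inr fun hsub => hnn (fun x hx => hsub (Finset.mem_union_right _ hx))
    · left
      obtain ⟨x, hx⟩ := Finset.nonempty_iff_ne_empty.mpr hneg
      rcases Finset.mem_inter.mp hx with ⟨h1, h2⟩
      exact ⟨x, Finset.mem_inter.mpr ⟨Finset.mem_union_right _ h1, h2⟩⟩
  · intro h r' hr'
    simp only [reduct, Finset.mem_image, Finset.mem_filter] at hr'
    obtain ⟨r, ⟨hr, hneg, hnn⟩, rfl⟩ := hr'
    have := h r hr
    simp only [satRule, Finset.union_empty] at this ⊢
    rcases this with h1 | h1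
    · left
      obtain ⟨x, hx⟩ := h1
      rcases Finset.mem_inter.mp hx with ⟨h2, h3⟩
      rcases Finset.mem_union.mp h2 with h4 | h4
      · exact ⟨x, Finset.mem_inter.mpr ⟨h4, h3⟩⟩
      · exfalso
        have : x ∈ r.neg ∩ Y := Finset.mem_inter.mpr ⟨h4, h3⟩
        simp [hneg] at this
    · right
      intro hsub
      exact h1 (Finset.union_subset hsub hnn)

end Aux
section Aux2
set_option linter.unusedSectionVars false
variable {Atom : Type} [DecidableEq Atom] [Fintype Atom]

lemma mem_projAway {A : Finset Atom} {P : ASPProgram Atom} {r' : ASPRule Atom} :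
    r' ∈ projAway P A ↔ ∃ r ∈ P, r.neg ∩ A = ∅ ∧ r.head ∩ A = ∅ ∧
      r' = ⟨r.head, r.pos \ A, r.neg, r.nneg \ A⟩ := by
  simp only [projAway, Finset.mem_image, Finset.mem_filter]
  constructor
  · rintro ⟨r, ⟨hr, h1, h2⟩, rfl⟩; exact ⟨r, hr, h1, h2, rfl⟩
  · rintro ⟨r, hr, h1, h2, rfl⟩; exact ⟨r, ⟨hr, h1, h2⟩, rfl⟩

lemma sat_proj_iff {A Y : Finset Atom} (hA : A ⊆ Y) {P : ASPProgram Atom} :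
    sat (Y \ A) (projAway P A) ↔ sat Y P := by
  constructor
  · intro h r hr
    by_cases hh : r.head ∩ A = ∅
    · by_cases hn : r.neg ∩ A = ∅
      · have hmem : (⟨r.head, r.pos \ A, r.neg, r.nneg \ A⟩ : ASPRule Atom)
            ∈ projAway P A := mem_projAway.mpr ⟨r, hr, hn, hh, rfl⟩
        exact (satRule_proj hA hh hn).mp (h _ hmem)
      · left
        obtain ⟨x, hx⟩ := Finset.nonempty_iff_ne_empty.mpr hn
        rcases Finset.mem_inter.mp hx with ⟨h1, h2⟩
        exact ⟨x, Finset.mem_inter.mpr ⟨Finset.mem_union_right _ h1, hA h2⟩⟩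
    · left
      obtain ⟨x, hx⟩ := Finset.nonempty_iff_ne_empty.mpr hh
      rcases Finset.mem_inter.mp hx with ⟨h1, h2⟩
      exact ⟨x, Finset.mem_inter.mpr ⟨Finset.mem_union_left _ h1, hA h2⟩⟩
  · intro h r' hr'
    obtain ⟨r, hr, hn, hh, rfl⟩ := mem_projAway.mp hr'
    exact (satRule_proj hA hh hn).mpr (h r hr)

lemma reduct_proj {A Y : Finset Atom} (hA : A ⊆ Y) {P : ASPProgram Atom} :
    reduct (projAway P A) (Y \ A) = projAway (reduct P Y) A := by
  ext r'
  simp only [reduct, projAway, Finset.mem_image, Finset.mem_filter]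
  constructor
  · rintro ⟨s, ⟨hs, hneg, hnn⟩, rfl⟩
    obtain ⟨r, ⟨hr, hn, hh⟩, rfl⟩ := hs
    refine ⟨⟨r.head, r.pos, ∅, ∅⟩, ⟨⟨r, ⟨hr, ?_, ?_⟩, rfl⟩, ?_, ?_⟩, ?_⟩
    · -- r.neg ∩ Y = ∅
      rw [← inter_sdiff_of_disj hn]; exact hneg
    · -- r.nneg ⊆ Y
      exact (sdiff_subset_iff' hA).mp hnn
    · simp
    · simpa using hh
    · simp
  · rintro ⟨s, ⟨hs, hneg, hh⟩, rfl⟩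
    obtain ⟨r, ⟨hr, hn, hnn⟩, rfl⟩ := hs
    simp only at hneg hh
    have hnA : r.neg ∩ A = ∅ := by
      rw [← Finset.subset_empty, ← hn]
      exact Finset.inter_subset_inter_left hA
    refine ⟨⟨r.head, r.pos \ A, r.neg, r.nneg \ A⟩, ⟨⟨r, ⟨hr, hnA, hh⟩, rfl⟩, ?_, ?_⟩, ?_⟩
    · rw [inter_sdiff_of_disj hnA]; exact hn
    · exact (sdiff_subset_iff' hA).mpr hnn
    · simp

lemma AS_subset_of_progOver {S I : Finset Atom} {P : ASPProgram Atom}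
    (hP : progOver P S) (hI : I ∈ AS P) : I ⊆ S := by
  by_contra hns
  obtain ⟨a, haI, haS⟩ : ∃ a ∈ I, a ∉ S := by
    by_contra h; push_neg at h; exact hns h
  apply hI.2 (I.erase a) (Finset.erase_ssubset haI)
  intro r' hr'
  have hsat := hI.1 r' hr'
  simp only [reduct, Finset.mem_image, Finset.mem_filter] at hr'
  obtain ⟨r, ⟨hr, -, -⟩, rfl⟩ := hr'
  obtain ⟨hhead, hpos, -, -⟩ := hP r hr
  simp only [satRule, Finset.union_empty] at hsat ⊢
  rcases hsat with h1 | h1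
  · left
    obtain ⟨x, hx⟩ := h1
    rcases Finset.mem_inter.mp hx with ⟨h2, h3⟩
    exact ⟨x, Finset.mem_inter.mpr ⟨h2,
      Finset.mem_erase.mpr ⟨fun he => haS (he ▸ hhead h2), h3⟩⟩⟩
  · exact Or.inr fun hsub => h1 (hsub.trans (Finset.erase_subset _ _))

lemma sat_reduct_transfer_B {B Y Y' : Finset Atom} {R : ASPProgram Atom}
    (hR : progOver R B) (hYB : Y' ∩ B = Y ∩ B)
    (hY : sat Y (reduct R Y)) : sat Y' (reduct R Y) := by
  intro r' hr'
  have hsat := hY r' hr'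
  simp only [reduct, Finset.mem_image, Finset.mem_filter] at hr'
  obtain ⟨r, ⟨hr, -, -⟩, rfl⟩ := hr'
  obtain ⟨hhead, hpos, -, -⟩ := hR r hr
  simp only [satRule, Finset.union_empty] at hsat ⊢
  have key : ∀ x ∈ r.head ∪ r.pos, (x ∈ Y' ↔ x ∈ Y) := by
    intro x hx
    have hxB : x ∈ B := by
      rcases Finset.mem_union.mp hx with h | h
      exacts [hhead h, hpos h]
    constructor
    · intro h
      exact (Finset.mem_inter.mp (hYB ▸ Finset.mem_inter.mpr ⟨h, hxB⟩)).1
    · intro h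
      exact (Finset.mem_inter.mp (hYB ▸ Finset.mem_inter.mpr ⟨h, hxB⟩ : x ∈ Y' ∩ B)).1
  rcases hsat with h1 | h1
  · left
    obtain ⟨x, hx⟩ := h1
    rcases Finset.mem_inter.mp hx with ⟨h2, h3⟩
    exact ⟨x, Finset.mem_inter.mpr ⟨h2,
      (key x (Finset.mem_union_left _ h2)).mpr h3⟩⟩
  · right
    intro hsub
    exact h1 fun x hx => (key x (Finset.mem_union_right _ hx)).mp (hsub hx)

end Aux2
section Aux3
set_option linter.unusedSectionVars false
variable {Atom : Type} [DecidableEq Atom] [Fintype Atom]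

lemma union_sdiff_cancel' {W A : Finset Atom} (h : W ∩ A = ∅) : (W ∪ A) \ A = W := by
  ext x
  simp only [Finset.mem_sdiff, Finset.mem_union]
  constructor
  · rintro ⟨h1 | h1, h2⟩
    · exact h1
    · exact absurd h1 h2
  · intro hx
    refine ⟨Or.inl hx, fun hA => ?_⟩
    exact Finset.notMem_empty x (h ▸ Finset.mem_inter.mpr ⟨hx, hA⟩)

lemma eq_of_sdiff_eq {X Y A : Finset Atom} (hAX : A ⊆ X) (hAY : A ⊆ Y)
    (h : X \ A = Y \ A) : X = Y := by
  ext x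
  by_cases hxA : x ∈ A
  · exact ⟨fun _ => hAY hxA, fun _ => hAX hxA⟩
  · constructor
    · intro hx
      exact (Finset.mem_sdiff.mp (h ▸ Finset.mem_sdiff.mpr ⟨hx, hxA⟩)).1
    · intro hx
      exact (Finset.mem_sdiff.mp (h ▸ Finset.mem_sdiff.mpr ⟨hx, hxA⟩ : x ∈ X \ A)).1

lemma projAway_progOver {A : Finset Atom} {P : ASPProgram Atom} :
    progOver (projAway P A) Aᶜ := by
  intro r' hr'
  obtain ⟨r, hr, hn, hh, rfl⟩ := mem_projAway.mp hr'
  refine ⟨fun x hx => Finset.mem_compl.mpr fun hxA =>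
            Finset.notMem_empty x (hh ▸ Finset.mem_inter.mpr ⟨hx, hxA⟩),
          fun x hx => Finset.mem_compl.mpr (Finset.mem_sdiff.mp hx).2,
          fun x hx => Finset.mem_compl.mpr fun hxA =>
            Finset.notMem_empty x (hn ▸ Finset.mem_inter.mpr ⟨hx, hxA⟩),
          fun x hx => Finset.mem_compl.mpr (Finset.mem_sdiff.mp hx).2⟩

lemma R_lift {A' B X X' Y : Finset Atom} {R₁ R₂ : ASPProgram Atom}
    (hRB : progOver (R₁ ∪ R₂) B) (hR1 : progOver R₁ A'ᶜ) (hR2 : progOver R₂ A')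
    (hA'X' : A' ⊆ X') (hXB : X' ∩ B = (X ∩ B) ∪ A')
    (hX : sat X (reduct (R₁ ∪ R₂) Y)) (hY : sat Y (reduct (R₁ ∪ R₂) Y))
    (hA'Y : A' ⊆ Y) :
    sat X' (reduct (R₁ ∪ R₂) Y) := by
  intro r' hr'
  have hsatX := hX r' hr'
  have hsatY := hY r' hr'
  simp only [reduct, Finset.mem_image, Finset.mem_filter] at hr'
  obtain ⟨r, ⟨hr, -, -⟩, rfl⟩ := hr'
  simp only [satRule, Finset.union_empty] at hsatX hsatY ⊢
  rcases Finset.mem_union.mp hr with h1 | h2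
  · obtain ⟨hhB, hpB, -, -⟩ := hRB r hr
    obtain ⟨hhC, hpC, -, -⟩ := hR1 r h1
    have key : ∀ x ∈ r.head ∪ r.pos, (x ∈ X' ↔ x ∈ X) := by
      intro x hx
      have hxB : x ∈ B := by
        rcases Finset.mem_union.mp hx with h | h
        exacts [hhB h, hpB h]
      have hxA : x ∉ A' := by
        rcases Finset.mem_union.mp hx with h | h
        exacts [Finset.mem_compl.mp (hhC h), Finset.mem_compl.mp (hpC h)]
      constructor
      · intro h
        have : x ∈ X' ∩ B := Finset.mem_inter.mpr ⟨h, hxB⟩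
        rw [hXB] at this
        rcases Finset.mem_union.mp this with h' | h'
        · exact (Finset.mem_inter.mp h').1
        · exact absurd h' hxA
      · intro h
        have : x ∈ X' ∩ B := by
          rw [hXB]
          exact Finset.mem_union_left _ (Finset.mem_inter.mpr ⟨h, hxB⟩)
        exact (Finset.mem_inter.mp this).1
    rcases hsatX with h3 | h3
    · left
      obtain ⟨x, hx⟩ := h3
      rcases Finset.mem_inter.mp hx with ⟨h4, h5⟩
      exact ⟨x, Finset.mem_inter.mpr ⟨h4,
        (key x (Finset.mem_union_left _ h4)).mpr h5⟩⟩
    · right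
      intro hsub
      exact h3 fun x hx => (key x (Finset.mem_union_right _ hx)).mp (hsub hx)
  · obtain ⟨hh2, hp2, -, -⟩ := hR2 r h2
    rcases hsatY with h3 | h3
    · left
      obtain ⟨x, hx⟩ := h3
      have hxh := (Finset.mem_inter.mp hx).1
      exact ⟨x, Finset.mem_inter.mpr ⟨hxh, hA'X' (hh2 hxh)⟩⟩
    · exact absurd (fun x hx => hA'Y (hp2 hx)) h3

end Aux3
/-- if `P` satisfies `Δʳ` for `A, B`, then `P_{|𝒰 ∖ (A∩B)}` is an
`(A∩B)`-simplification of `P` relative to `B`. -/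
theorem stmt16 {Atom : Type} [DecidableEq Atom] [Fintype Atom]
    (P : ASPProgram Atom) (A B : Finset Atom) (hD : DeltaR P A B) :
    progOver (projAway P (A ∩ B)) (A ∩ B)ᶜ ∧
      SimpEq P (A ∩ B) B (projAway P (A ∩ B)) := by
  obtain ⟨hs1, hs2, hs3⟩ := hD
  set A' := A ∩ B with hA'def
  have hA'B : A' ⊆ B := Finset.inter_subset_right
  have hA'A : A' ⊆ A := Finset.inter_subset_left
  refine ⟨projAway_progOver, ?_⟩
  intro R hRB hRsep
  obtain ⟨R₁, R₂, rfl, hR1, hR2⟩ := hRsep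
  have hproj : projAway P A' ∪ projAway (R₁ ∪ R₂) A' = projAway (P ∪ (R₁ ∪ R₂)) A' :=
    projAway_union.symm
  rw [hproj]
  ext Z
  simp only [Set.mem_image]
  constructor
  · rintro ⟨Y, hY, rfl⟩
    have h := hY.1
    rw [reduct_union] at h
    obtain ⟨hYsatP, hYsatR⟩ := sat_union.mp h
    have hYP : sat Y P := sat_reduct_iff.mp hYsatP
    have hYmin : ∀ Y' ⊂ Y, Y' ∩ B = Y ∩ B → ¬ sat Y' (reduct P Y) := by
      intro Y' hss hB hsat'
      apply hY.2 Y' hss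
      rw [reduct_union]
      exact sat_union.mpr ⟨hsat', sat_reduct_transfer_B hRB hB hYsatR⟩
    have hSEBYY : (Y, Y) ∈ SEB B P :=
      ⟨Or.inl rfl, hYP, hYmin, fun h => absurd h (ssubset_irrefl Y)⟩
    have hA'Y : A' ⊆ Y := hs1 Y hSEBYY
    have hkey : reduct (projAway (P ∪ (R₁ ∪ R₂)) A') (Y \ A')
        = projAway (reduct (P ∪ (R₁ ∪ R₂)) Y) A' := reduct_proj hA'Y
    refine ⟨?_, ?_⟩
    · rw [hkey]
      exact (sat_proj_iff hA'Y).mpr hY.1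
    · intro W hW hsatW
      rw [hkey] at hsatW
      have hWA : W ∩ A' = ∅ := by
        rw [Finset.eq_empty_iff_forall_notMem]
        intro x hx
        rcases Finset.mem_inter.mp hx with ⟨h1, h2⟩
        exact (Finset.mem_sdiff.mp (hW.subset h1)).2 h2
      have hWd : (W ∪ A') \ A' = W := union_sdiff_cancel' hWA
      have hsatX : sat (W ∪ A') (reduct (P ∪ (R₁ ∪ R₂)) Y) :=
        (sat_proj_iff Finset.subset_union_right).mp (by rw [hWd]; exact hsatW)
      have hss : W ∪ A' ⊂ Y := by
        rw [Finset.ssubset_iff_subset_ne]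
        refine ⟨Finset.union_subset (hW.subset.trans Finset.sdiff_subset) hA'Y, fun he => ?_⟩
        exact hW.ne (by rw [← he, hWd])
      exact hY.2 _ hss hsatX
  · intro hZ
    have hZC : Z ⊆ A'ᶜ := AS_subset_of_progOver projAway_progOver hZ
    have hZA : Z ∩ A' = ∅ := by
      rw [Finset.eq_empty_iff_forall_notMem]
      intro x hx
      rcases Finset.mem_inter.mp hx with ⟨h1, h2⟩
      exact Finset.mem_compl.mp (hZC h1) h2
    set Y := Z ∪ A' with hYdef
    have hA'Y : A' ⊆ Y := Finset.subset_union_right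
    have hYZ : Y \ A' = Z := union_sdiff_cancel' hZA
    have hkey : reduct (projAway (P ∪ (R₁ ∪ R₂)) A') Z
        = projAway (reduct (P ∪ (R₁ ∪ R₂)) Y) A' := by
      rw [← hYZ]; exact reduct_proj hA'Y
    have hYsat : sat Y (reduct (P ∪ (R₁ ∪ R₂)) Y) := by
      apply (sat_proj_iff hA'Y).mp
      rw [hYZ, ← hkey]
      exact hZ.1
    have h := hYsat
    rw [reduct_union] at h
    obtain ⟨hYsatP, hYsatR⟩ := sat_union.mp h
    have hYP : sat Y P := sat_reduct_iff.mp hYsatP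
    have hYmin : ∀ Y' ⊂ Y, Y' ∩ B = Y ∩ B → ¬ sat Y' (reduct P Y) := by
      intro Y' hss hB hsat'
      have hA'Y' : A' ⊆ Y' := by
        intro x hx
        have hxm : x ∈ Y' ∩ B := by
          rw [hB]; exact Finset.mem_inter.mpr ⟨hA'Y hx, hA'B hx⟩
        exact (Finset.mem_inter.mp hxm).1
      have hsat'' : sat Y' (reduct (P ∪ (R₁ ∪ R₂)) Y) := by
        rw [reduct_union]
        exact sat_union.mpr ⟨hsat', sat_reduct_transfer_B hRB hB hYsatR⟩
      have hW : sat (Y' \ A') (reduct (projAway (P ∪ (R₁ ∪ R₂)) A') Z) := by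
        rw [hkey]
        exact (sat_proj_iff hA'Y').mpr hsat''
      have hWss : Y' \ A' ⊂ Z := by
        rw [Finset.ssubset_iff_subset_ne]
        constructor
        · rw [← hYZ]; exact Finset.sdiff_subset_sdiff hss.subset (le_refl _)
        · intro he
          exact hss.ne (eq_of_sdiff_eq hA'Y' hA'Y (he.trans hYZ.symm))
      exact hZ.2 _ hWss hW
    have hSEBYY : (Y, Y) ∈ SEB B P :=
      ⟨Or.inl rfl, hYP, hYmin, fun h => absurd h (ssubset_irrefl Y)⟩
    refine ⟨Y, ⟨hYsat, ?_⟩, hYZ⟩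
    intro X hXY hsatX
    have hX := hsatX
    rw [reduct_union] at hX
    obtain ⟨hXP, hXR⟩ := sat_union.mp hX
    by_cases hcase : X ∩ B = Y ∩ B
    · have hA'X : A' ⊆ X := by
        intro x hx
        have hxm : x ∈ X ∩ B := by
          rw [hcase]; exact Finset.mem_inter.mpr ⟨hA'Y hx, hA'B hx⟩
        exact (Finset.mem_inter.mp hxm).1
      have hW : sat (X \ A') (reduct (projAway (P ∪ (R₁ ∪ R₂)) A') Z) := by
        rw [hkey]; exact (sat_proj_iff hA'X).mpr hsatX
      have hWss : X \ A' ⊂ Z := by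
        rw [Finset.ssubset_iff_subset_ne]
        constructor
        · rw [← hYZ]; exact Finset.sdiff_subset_sdiff hXY.subset (le_refl _)
        · intro he
          exact hXY.ne (eq_of_sdiff_eq hA'X hA'Y (he.trans hYZ.symm))
      exact hZ.2 _ hWss hW
    · have hssB : X ∩ B ⊂ Y ∩ B :=
        Finset.ssubset_iff_subset_ne.mpr
          ⟨Finset.inter_subset_inter hXY.subset (le_refl _), hcase⟩
      have hXBSEB : (X ∩ B, Y) ∈ SEB B P :=
        ⟨Or.inr hssB, hYP, hYmin, fun _ => ⟨X, hXY.subset, rfl, hXP⟩⟩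
      have hV := hs3 (X ∩ B) Y hXBSEB
      have hYA : Y ∩ A ∩ B = A' := by
        rw [Finset.inter_assoc, ← hA'def]
        exact Finset.inter_eq_right.mpr hA'Y
      rw [hYA] at hV
      rcases hV.1 with hVY | hVss
      · replace hVY : X ∩ B ∪ A' = Y := hVY
        have hXA : X \ A = Y \ A := by
          ext x
          simp only [Finset.mem_sdiff]
          constructor
          · rintro ⟨h1, h2⟩; exact ⟨hXY.subset h1, h2⟩
          · rintro ⟨h1, h2⟩
            refine ⟨?_, h2⟩
            rw [← hVY] at h1
            rcases Finset.mem_union.mp h1 with h3 | h3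
            · exact (Finset.mem_inter.mp h3).1
            · exact absurd (hA'A h3) h2
        exact absurd (hs2 X Y ⟨hXY.subset, hYP, hXP⟩ hSEBYY hXA) hXY.ne
      · replace hVss : X ∩ B ∪ A' ⊂ Y ∩ B := hVss
        have hVssY : X ∩ B ∪ A' ⊂ Y := lt_of_lt_of_le hVss Finset.inter_subset_left
        obtain ⟨X', hX'Y, hX'B, hX'P⟩ := hV.2.2.2 hVssY
        have hA'X' : A' ⊆ X' := by
          intro x hx
          have hxm : x ∈ X' ∩ B := by
            rw [hX'B]; exact Finset.mem_union_right _ hx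
          exact (Finset.mem_inter.mp hxm).1
        have hX'R : sat X' (reduct (R₁ ∪ R₂) Y) :=
          R_lift hRB hR1 hR2 hA'X' hX'B hXR hYsatR hA'Y
        have hX'sat : sat X' (reduct (P ∪ (R₁ ∪ R₂)) Y) := by
          rw [reduct_union]; exact sat_union.mpr ⟨hX'P, hX'R⟩
        have hW : sat (X' \ A') (reduct (projAway (P ∪ (R₁ ∪ R₂)) A') Z) := by
          rw [hkey]; exact (sat_proj_iff hA'X').mpr hX'sat
        have hWss : X' \ A' ⊂ Z := by
          rw [Finset.ssubset_iff_subset_ne]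
          constructor
          · rw [← hYZ]; exact Finset.sdiff_subset_sdiff hX'Y (le_refl _)
          · intro he
            have hXY' : X' = Y := eq_of_sdiff_eq hA'X' hA'Y (he.trans hYZ.symm)
            rw [hXY'] at hX'B
            exact hVss.ne hX'B.symm
        exact hZ.2 _ hWss hW
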